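/- arXiv:1103.3027 — 2 statements merged into one kernel-verified Lean document; each statement's English description precedes it below -/
import Mathlib

section
/- The sequence u_n = 2·∫₀^{1/n} (sin(nπy)/sin(πy))² · y dy is non-increasing in n. -/
/-!
The substitution `y = x / n` turns `u_n` into `2 ∫₀¹ (sin(πx) / (n sin(πx/n)))² x dx`, an integral
over a fixed interval. Since `sin θ / θ` decreases on `(0, π]`, the denominator
`n sin(πx/n) = πx · (sin θ / θ)|_{θ = πx/n}` grows with `n`, so the integrand decreases pointwise.
-/

open Real intervalIntegral

/-- `u_n = 2 ∫₀^{1/n} (sin(nπy)/sin(πy))² y dy`. -/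
noncomputable def fejerIntegral (n : ℕ) : ℝ :=
  2 * ∫ y in (0:ℝ)..(1 / n), (Real.sin (n * π * y) / Real.sin (π * y)) ^ 2 * y

open Set MeasureTheory

lemma antitoneOn_sin_div : AntitoneOn (fun x => sin x / x) (Ioc 0 π) := by
  have h := strictConcaveOn_sin_Icc.concaveOn.antitoneOn_slope_gt (left_mem_Icc.2 pi_pos.le)
  intro a ha b hb hab
  simpa [slope_def_field] using h ⟨Ioc_subset_Icc_self ha, ha.1⟩ ⟨Ioc_subset_Icc_self hb, hb.1⟩ hab

lemma mul_sin_div_le_mul_sin_div {s t x : ℝ} (hs : 0 < s) (hst : s ≤ t) (hx : 0 ≤ x)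
    (hxs : x ≤ π * s) : s * sin (x / s) ≤ t * sin (x / t) := by
  rcases hx.eq_or_lt with rfl | hx
  · simp
  have ht : 0 < t := hs.trans_le hst
  have hsinc := antitoneOn_sin_div
    ⟨div_pos hx ht, (div_le_iff₀ ht).2 (hxs.trans (by gcongr))⟩
    ⟨div_pos hx hs, (div_le_iff₀ hs).2 hxs⟩ (div_le_div_of_nonneg_left hx.le hs hst)
  calc s * sin (x / s) = x * (sin (x / s) / (x / s)) := by field_simp
    _ ≤ x * (sin (x / t) / (x / t)) := by gcongr
    _ = t * sin (x / t) := by field_simp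

noncomputable def scaledFejerIntegrand (t x : ℝ) : ℝ :=
  (sin (π * x) / (t * sin (π * x / t))) ^ 2 * x

lemma fejerIntegral_eq_integral_scaledFejerIntegrand {n : ℕ} (hn : n ≠ 0) :
    fejerIntegral n = 2 * ∫ x in (0:ℝ)..1, scaledFejerIntegrand n x := by
  have hn : (n : ℝ) ≠ 0 := Nat.cast_ne_zero.2 hn
  have hpoint (x : ℝ) : scaledFejerIntegrand n x =
      (n : ℝ)⁻¹ * ((sin (n * π * (x / n)) / sin (π * (x / n))) ^ 2 * (x / n)) := by
    rw [show (n : ℝ) * π * (x / n) = π * x by field_simp, ← mul_div_assoc π x,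
      scaledFejerIntegrand]
    ring
  rw [fejerIntegral, integral_congr fun x _ => hpoint x, intervalIntegral.integral_const_mul,
    integral_comp_div (fun y => (sin (n * π * y) / sin (π * y)) ^ 2 * y) hn, smul_eq_mul,
    zero_div, inv_mul_cancel_left₀ hn]

section scaledFejerIntegrand

variable {s t x : ℝ}

lemma scaledFejerIntegrand_anti (hs : 1 ≤ s) (hst : s ≤ t) (hx : x ∈ Icc (0:ℝ) 1) :
    scaledFejerIntegrand t x ≤ scaledFejerIntegrand s x := by
  have hπx : 0 ≤ π * x := mul_nonneg pi_pos.le hx.1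
  have hπx_le (r : ℝ) (hr : 1 ≤ r) : π * x ≤ π * r := by gcongr; exact hx.2.trans hr
  have hsin : 0 ≤ sin (π * x) := sin_nonneg_of_nonneg_of_le_pi hπx (by simpa using hπx_le 1 le_rfl)
  rcases hsin.eq_or_lt with hzero | hsin
  · simp [scaledFejerIntegrand, ← hzero]
  -- the case `s = 1` of the key inequality keeps the smaller denominator away from zero
  have hden_pos : 0 < s * sin (π * x / s) := by
    have := mul_sin_div_le_mul_sin_div one_pos hs hπx (hπx_le 1 le_rfl)
    rw [one_mul, div_one] at this
    exact hsin.trans_le this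
  have hden_le := mul_sin_div_le_mul_sin_div (one_pos.trans_le hs) hst hπx (hπx_le s hs)
  unfold scaledFejerIntegrand
  gcongr
  · exact hx.1
  · exact div_nonneg hsin.le (hden_pos.trans_le hden_le).le

lemma scaledFejerIntegrand_nonneg (hx : 0 ≤ x) : 0 ≤ scaledFejerIntegrand t x := by
  unfold scaledFejerIntegrand
  positivity

lemma scaledFejerIntegrand_le_one (ht : 1 ≤ t) (hx : x ∈ Icc (0:ℝ) 1) :
    scaledFejerIntegrand t x ≤ 1 := by
  refine (scaledFejerIntegrand_anti le_rfl ht hx).trans ?_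
  have hsq : (sin (π * x) / sin (π * x)) ^ 2 ≤ 1 := by
    rw [sq_le_one_iff_abs_le_one, abs_div]
    exact div_self_le_one _
  simpa [scaledFejerIntegrand] using mul_le_one₀ hsq hx.1 hx.2

lemma intervalIntegrable_scaledFejerIntegrand (ht : 1 ≤ t) :
    IntervalIntegrable (scaledFejerIntegrand t) volume 0 1 := by
  have hmeas : Measurable (scaledFejerIntegrand t) := by
    unfold scaledFejerIntegrand
    fun_prop
  refine IntervalIntegrable.mono_fun' (g := fun _ => (1:ℝ)) intervalIntegrable_const
    hmeas.aestronglyMeasurable ?_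
  rw [uIoc_of_le zero_le_one]
  refine (ae_restrict_iff' measurableSet_Ioc).2 (Filter.Eventually.of_forall fun x hx => ?_)
  change ‖scaledFejerIntegrand t x‖ ≤ 1
  rw [norm_of_nonneg (scaledFejerIntegrand_nonneg hx.1.le)]
  exact scaledFejerIntegrand_le_one ht (Ioc_subset_Icc_self hx)

end scaledFejerIntegrand

/-- The sequence `u_n` is non-increasing in `n`. -/
theorem fejerIntegral_antitone (m n : ℕ) (hm : 1 ≤ m) (hmn : m ≤ n) :
    fejerIntegral n ≤ fejerIntegral m := by
  have hm' : (1 : ℝ) ≤ m := by exact_mod_cast hm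
  have hmn' : (m : ℝ) ≤ n := by exact_mod_cast hmn
  rw [fejerIntegral_eq_integral_scaledFejerIntegrand (by omega),
    fejerIntegral_eq_integral_scaledFejerIntegrand (by omega)]
  gcongr 2 * ?_
  exact integral_mono_on zero_le_one (intervalIntegrable_scaledFejerIntegrand (hm'.trans hmn'))
    (intervalIntegrable_scaledFejerIntegrand hm') fun x hx =>
      scaledFejerIntegrand_anti hm' hmn' hx
end

section
/- For 0 < s, s' and t, t' ∈ (0,1], the inequality φ_{s,t}(x) ≤ φ_{s',t'}(x) holds for all sufficiently small x > 0 if and only if s > s', or (s = s' and t ≥ t'). -/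
/-! With `L = log (1/x)`, which tends to `+∞` as `x → 0⁺`, one has
`φ_{s,t}(x) = exp (-s L + L^(1-t))`. For `t > 0` the term `L^(1-t)` is `o(L)`, so comparing
`φ_{s,t}` with `φ_{s',t'}` near `0` is the lexicographic comparison of `(-s, 1-t)` with
`(-s', 1-t')`: the linear coefficients decide, and on a tie the larger power of `L` wins. -/

open Real

/-- `φ_{s,t}(x) = x^s exp((log(1/x))^{1-t})`. -/
noncomputable def phiGauge (s t x : ℝ) : ℝ :=
  x ^ s * Real.exp ((Real.log (1 / x)) ^ (1 - t))

open Filter Topology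

namespace Real

theorem eventually_rpow_lt_mul_atTop {p c : ℝ} (hp : p < 1) (hc : 0 < c) :
    ∀ᶠ L : ℝ in atTop, L ^ p < c * L := by
  have hsmall : ∀ᶠ L : ℝ in atTop, L ^ (p - 1) < c := by
    have := tendsto_rpow_neg_atTop (y := 1 - p) (by linarith)
    simpa only [neg_sub] using this.eventually_lt_const hc
  filter_upwards [hsmall, eventually_gt_atTop 0] with L hL hL0
  calc L ^ p = L ^ (p - 1) * L := by rw [rpow_sub_one hL0.ne', div_mul_cancel₀ _ hL0.ne']
    _ < c * L := mul_lt_mul_of_pos_right hL hL0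

section LinearPlusRpow

variable {a a' p p' : ℝ}

theorem eventually_mul_add_rpow_le_atTop (hp : p < 1)
    (h : a < a' ∨ (a = a' ∧ p ≤ p')) :
    ∀ᶠ L : ℝ in atTop, a * L + L ^ p ≤ a' * L + L ^ p' := by
  rcases h with ha | ⟨rfl, hpp'⟩
  · filter_upwards [eventually_rpow_lt_mul_atTop hp (sub_pos.2 ha), eventually_ge_atTop 0]
      with L hL hL0
    nlinarith [rpow_nonneg hL0 p']
  · filter_upwards [eventually_ge_atTop 1] with L hL
    gcongr

theorem eventually_mul_add_rpow_lt_atTop (hp : p < 1)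
    (h : a < a' ∨ (a = a' ∧ p < p')) :
    ∀ᶠ L : ℝ in atTop, a * L + L ^ p < a' * L + L ^ p' := by
  rcases h with ha | ⟨rfl, hpp'⟩
  · filter_upwards [eventually_rpow_lt_mul_atTop hp (sub_pos.2 ha), eventually_ge_atTop 0]
      with L hL hL0
    nlinarith [rpow_nonneg hL0 p']
  · filter_upwards [eventually_gt_atTop 1] with L hL
    gcongr
    exact rpow_lt_rpow_of_exponent_lt hL hpp'

theorem eventually_mul_add_rpow_le_atTop_iff (hp : p < 1) (hp' : p' < 1) :
    (∀ᶠ L : ℝ in atTop, a * L + L ^ p ≤ a' * L + L ^ p') ↔ a < a' ∨ (a = a' ∧ p ≤ p') := by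
  refine ⟨fun h => ?_, eventually_mul_add_rpow_le_atTop hp⟩
  by_contra hlex
  have hlex' : a' < a ∨ (a' = a ∧ p' < p) := by
    rcases lt_trichotomy a a' with ha | rfl | ha
    · exact absurd (Or.inl ha) hlex
    · exact Or.inr ⟨rfl, lt_of_not_ge fun hpp' => hlex (Or.inr ⟨rfl, hpp'⟩)⟩
    · exact Or.inl ha
  obtain ⟨L, hle, hlt⟩ := (h.and (eventually_mul_add_rpow_lt_atTop hp' hlex')).exists
  exact hlt.not_ge hle

end LinearPlusRpow

theorem eventually_nhdsGT_zero_iff_atTop {P : ℝ → Prop} :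
    (∀ᶠ x in 𝓝[>] 0, P x) ↔ ∀ᶠ L in atTop, P (exp (-L)) := by
  rw [← map_exp_atBot, ← map_neg_atTop, map_map, eventually_map]
  rfl

end Real

theorem phiGauge_exp_neg (s t L : ℝ) :
    phiGauge s t (exp (-L)) = exp (-s * L + L ^ (1 - t)) := by
  rw [phiGauge, ← exp_mul, one_div, ← exp_neg, neg_neg, log_exp, ← exp_add]
  ring_nf

theorem phiGauge_le_iff_general (s s' t t' : ℝ)
    (ht : t ∈ Set.Ioc (0:ℝ) 1) (ht' : t' ∈ Set.Ioc (0:ℝ) 1) :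
    (∃ δ : ℝ, 0 < δ ∧ ∀ x : ℝ, 0 < x → x < δ → phiGauge s t x ≤ phiGauge s' t' x) ↔
      (s' < s ∨ (s = s' ∧ t' ≤ t)) := by
  calc (∃ δ : ℝ, 0 < δ ∧ ∀ x : ℝ, 0 < x → x < δ → phiGauge s t x ≤ phiGauge s' t' x)
      ↔ ∀ᶠ x in 𝓝[>] 0, phiGauge s t x ≤ phiGauge s' t' x := by
        simp only [(nhdsGT_basis (0 : ℝ)).eventually_iff, Set.mem_Ioo, and_imp]
    _ ↔ ∀ᶠ L : ℝ in atTop, -s * L + L ^ (1 - t) ≤ -s' * L + L ^ (1 - t') := by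
        simp only [eventually_nhdsGT_zero_iff_atTop, phiGauge_exp_neg, exp_le_exp]
    _ ↔ -s < -s' ∨ (-s = -s' ∧ 1 - t ≤ 1 - t') :=
        eventually_mul_add_rpow_le_atTop_iff (by linarith [ht.1]) (by linarith [ht'.1])
    _ ↔ s' < s ∨ (s = s' ∧ t' ≤ t) := by
        rw [neg_lt_neg_iff, neg_inj, sub_le_sub_iff_left]

/-- For `s, s' > 0` and `t, t' ∈ (0,1]`, `φ_{s,t}(x) ≤ φ_{s',t'}(x)` for all sufficiently
small `x > 0` iff `s > s'` or (`s = s'` and `t ≥ t'`). -/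
theorem phiGauge_le_iff (s s' t t' : ℝ) (hs : 0 < s) (hs' : 0 < s')
    (ht : t ∈ Set.Ioc (0:ℝ) 1) (ht' : t' ∈ Set.Ioc (0:ℝ) 1) :
    (∃ δ : ℝ, 0 < δ ∧ ∀ x : ℝ, 0 < x → x < δ → phiGauge s t x ≤ phiGauge s' t' x) ↔
      (s' < s ∨ (s = s' ∧ t' ≤ t)) :=
  phiGauge_le_iff_general s s' t t' ht ht'
end
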